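/- The orthogonal projection π_{N_E} of Q^I onto the incremental subspace N_E is given explicitly by (π_{N_E} x)(i) = Σ_{F⊂E} (-1)^{|E∖F|} x^+(i_F) / |I_{F^C}|, for all x ∈ Q^I, where the right-hand side depends only on i_E. -/

import Mathlib

/-!
Write `P` for the displayed operator. Marginalisation is self-adjoint, hence so is `P`. For `j ∈ E`
and `w ∈ L_{E∖j}`, the `F`-marginal of `w` is `I_j` times its `(F ∪ {j})`-marginal, so the terms
of `P w` indexed by `F` and `F ∪ {j}` cancel and `P w = 0`; by self-adjointness `P x ⊥ L_{E∖j}`.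
For `z ∈ N_E` every proper marginal `z⁺_F` lies in some `L_{E∖j}`, so `⟨z⁺_F, z⁺_F⟩`, a multiple
of `⟨z⁺_F, z⟩`, vanishes. Only the term `F = E` of `P z` survives, `P z = z`, and
`⟨x - P x, z⟩ = ⟨x, z - P z⟩ = 0`.
-/

open Finset

namespace Hier

variable {m : ℕ}

abbrev Cell (I : Fin m → ℕ) := ∀ j, Fin (I j)

variable (I : Fin m → ℕ)

/-- standard inner product on ℚ^I -/
def dot (x y : Cell I → ℚ) : ℚ := ∑ i, x i * y i

/-- L_E: tables depending only on the coordinates in E -/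
def LL (E : Finset (Fin m)) : Submodule ℚ (Cell I → ℚ) where
  carrier := {x | ∀ i i' : Cell I, (∀ j ∈ E, i j = i' j) → x i = x i'}
  zero_mem' := by intro i i' _; rfl
  add_mem' := by
    intro a b ha hb i i' h
    simp only [Pi.add_apply, ha i i' h, hb i i' h]
  smul_mem' := by
    intro c a ha i i' h
    simp only [Pi.smul_apply, ha i i' h]

/-- orthogonal complement w.r.t. the standard inner product -/
def perp (S : Submodule ℚ (Cell I → ℚ)) : Submodule ℚ (Cell I → ℚ) where
  carrier := {y | ∀ x ∈ S, dot I x y = 0}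
  zero_mem' := by intro x hx; simp [dot]
  add_mem' := by
    intro a b ha hb x hx
    have h1 := ha x hx
    have h2 := hb x hx
    simp only [dot, Pi.add_apply, mul_add, Finset.sum_add_distrib] at *
    rw [h1, h2]; ring
  smul_mem' := by
    intro c a ha x hx
    have h1 := ha x hx
    simp only [dot, Pi.smul_apply, smul_eq_mul] at *
    calc ∑ i, x i * (c * a i) = c * ∑ i, x i * a i := by
          rw [Finset.mul_sum]; congr 1; funext i; ring
      _ = 0 := by rw [h1]; ring

/-- incremental subspace N_E -/
def NN (E : Finset (Fin m)) : Submodule ℚ (Cell I → ℚ) :=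
  LL I E ⊓ perp I (⨆ j ∈ E, LL I (E.erase j))

/-- F-marginal of x evaluated at the marginal cell i_F -/
def marg (x : Cell I → ℚ) (F : Finset (Fin m)) (i : Cell I) : ℚ :=
  ∑ j : Cell I, if ∀ k ∈ F, j k = i k then x j else 0

/-- kernel of the configuration determined by a family of facets:
tables all of whose F-marginals vanish, F ∈ Fs -/
def kern (Fs : Finset (Finset (Fin m))) : Submodule ℚ (Cell I → ℚ) where
  carrier := {y | ∀ F ∈ Fs, ∀ i, marg I y F i = 0}
  zero_mem' := by intro F hF i; simp [marg]
  add_mem' := by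
    intro a b ha hb F hF i
    have h1 := ha F hF i
    have h2 := hb F hF i
    simp only [marg, Pi.add_apply] at *
    have key : (∑ j : Cell I, if ∀ k ∈ F, j k = i k then a j + b j else 0)
        = (∑ j : Cell I, if ∀ k ∈ F, j k = i k then a j else 0)
          + (∑ j : Cell I, if ∀ k ∈ F, j k = i k then b j else 0) := by
      rw [← Finset.sum_add_distrib]
      apply Finset.sum_congr rfl
      intro j _
      split <;> simp
    rw [key, h1, h2]; ring
  smul_mem' := by
    intro c a ha F hF i
    have h1 := ha F hF i
    simp only [marg, Pi.smul_apply, smul_eq_mul] at *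
    calc ∑ j : Cell I, (if ∀ k ∈ F, j k = i k then c * a j else 0)
        = c * ∑ j : Cell I, (if ∀ k ∈ F, j k = i k then a j else 0) := by
          rw [Finset.mul_sum]; congr 1; funext j; split <;> simp
      _ = 0 := by rw [h1]; ring

/-- a (finite) abstract simplicial complex on [m] -/
def IsComplex (Δ : Finset (Finset (Fin m))) : Prop :=
  ∀ F ∈ Δ, ∀ F' ⊆ F, F' ∈ Δ

/-- the maximal elements (facets) of Δ -/
def facets (Δ : Finset (Finset (Fin m))) : Finset (Finset (Fin m)) :=
  Δ.filter (fun D => ∀ F ∈ Δ, D ⊆ F → F = D)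

/-- row space of the hierarchical-model configuration A_Δ -/
def rowsp (Δ : Finset (Finset (Fin m))) : Submodule ℚ (Cell I → ℚ) :=
  ⨆ D ∈ facets Δ, LL I D

/-- single partial difference operator ∂_j -/
def pd1 (hI : ∀ j, 0 < I j) (j : Fin m) (x : Cell I → ℚ) : Cell I → ℚ :=
  fun i => x i - x (Function.update i j ⟨0, hI j⟩)

/-- ∂_E: composition of the (commuting) ∂_j, j ∈ E -/
noncomputable def pdE (hI : ∀ j, 0 < I j) (E : Finset (Fin m)) : (Cell I → ℚ) → (Cell I → ℚ) :=
  E.toList.foldr (fun j f => pd1 I hI j ∘ f) id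

lemma dot_comm (x y : Cell I → ℚ) : dot I x y = dot I y x := dotProduct_comm x y

lemma dot_eq_dotProduct (x y : Cell I → ℚ) : dot I x y = x ⬝ᵥ y := rfl

lemma mem_perp_iSup {ι : Sort*} {S : ι → Submodule ℚ (Cell I → ℚ)} {y : Cell I → ℚ}
    (h : ∀ j, y ∈ perp I (S j)) : y ∈ perp I (⨆ j, S j) := by
  have hle : (⨆ j, S j) ≤ LinearMap.ker ((dotProductBilin ℚ ℚ).flip y) :=
    iSup_le fun j u hu => h j u hu
  exact fun _ hu => hle hu

lemma LL_mono {F E : Finset (Fin m)} (h : F ⊆ E) : LL I F ≤ LL I E :=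
  fun _ hx i i' hii => hx i i' fun j hj => hii j (h hj)

lemma marg_mem_LL (x : Cell I → ℚ) (F : Finset (Fin m)) : marg I x F ∈ LL I F := by
  intro i i' h
  refine Finset.sum_congr rfl fun j _ => if_congr ?_ rfl rfl
  exact forall₂_congr fun k hk => by rw [h k hk]

lemma dot_marg_comm (x z : Cell I → ℚ) (F : Finset (Fin m)) :
    dot I (marg I x F) z = dot I x (marg I z F) := by
  simp only [dot, marg, Finset.sum_mul, Finset.mul_sum, ite_mul, zero_mul, mul_ite, mul_zero]
  rw [Finset.sum_comm]
  refine Finset.sum_congr rfl fun j _ => Finset.sum_congr rfl fun i _ => ?_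
  rw [if_congr (forall₂_congr fun k _ => eq_comm) rfl rfl, mul_comm]

lemma marg_univ (x : Cell I → ℚ) (i : Cell I) : marg I x univ i = x i := by
  simp [marg, ← funext_iff]

lemma sum_eq_mul_sum_slice (j : Fin m) {g : Cell I → ℚ}
    (hg : ∀ k (v : Fin (I j)), g (Function.update k j v) = g k) (a : Fin (I j)) :
    ∑ k, g k = I j * ∑ k with k j = a, g k := by
  have hslice : ∀ v : Fin (I j), ∑ k with k j = v, g k = ∑ k with k j = a, g k := fun v =>
    Finset.sum_nbij' (fun k => Function.update k j a) (fun k => Function.update k j v)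
      (by simp) (by simp) (fun k hk => by simp_all) (fun k hk => by simp_all)
      (fun k _ => (hg k a).symm)
  rw [← Finset.sum_fiberwise Finset.univ (fun k : Cell I => k j) g]
  simp [hslice]

lemma marg_erase_of_mem_LL {G F : Finset (Fin m)} {j : Fin m} (hjF : j ∈ F) (hjG : j ∉ G)
    {w : Cell I → ℚ} (hw : w ∈ LL I G) (i : Cell I) :
    marg I w (F.erase j) i = I j * marg I w F i := by
  set g : Cell I → ℚ := fun k => if ∀ l ∈ F.erase j, k l = i l then w k else 0
  have hg : ∀ k (v : Fin (I j)), g (Function.update k j v) = g k := by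
    intro k v
    have hwk : w (Function.update k j v) = w k :=
      hw _ _ fun l hl => Function.update_of_ne (ne_of_mem_of_not_mem hl hjG) _ _
    refine if_congr (forall₂_congr fun l hl => ?_) hwk rfl
    rw [Function.update_of_ne (Finset.ne_of_mem_erase hl)]
  have hcond : ∀ k : Cell I, (∀ l ∈ F, k l = i l) ↔ k j = i j ∧ ∀ l ∈ F.erase j, k l = i l := by
    intro k
    conv_lhs => rw [← Finset.insert_erase hjF]
    exact Finset.forall_mem_insert _ _ _
  rw [marg, sum_eq_mul_sum_slice I j hg (i j), marg, Finset.sum_filter]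
  simp only [g, hcond, ite_and]

lemma marg_eq_prod_mul_of_mem_LL {G : Finset (Fin m)} {w : Cell I → ℚ} (hw : w ∈ LL I G)
    (i : Cell I) : marg I w G i = (∏ j ∈ Gᶜ, (I j : ℚ)) * w i := by
  suffices h : ∀ s ⊆ Gᶜ, marg I w sᶜ i = (∏ j ∈ s, (I j : ℚ)) * w i by
    simpa using h Gᶜ subset_rfl
  intro s
  induction s using Finset.induction_on with
  | empty => simp [marg_univ]
  | @insert j s hjs ih =>
    intro hsub
    have hjG : j ∉ G := Finset.mem_compl.mp (hsub (Finset.mem_insert_self j s))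
    rw [Finset.compl_insert, marg_erase_of_mem_LL I (Finset.mem_compl.mpr hjs) hjG hw,
      ih ((Finset.subset_insert j s).trans hsub), Finset.prod_insert hjs, mul_assoc]

def coeff (E F : Finset (Fin m)) : ℚ := (-1 : ℚ) ^ (E \ F).card / ∏ j ∈ Fᶜ, (I j : ℚ)

def projN (E : Finset (Fin m)) (x : Cell I → ℚ) : Cell I → ℚ :=
  fun i => ∑ F ∈ E.powerset, coeff I E F * marg I x F i

lemma coeff_mul_of_notMem {E F : Finset (Fin m)} {j : Fin m} (hjE : j ∈ E) (hjF : j ∉ F)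
    (hj : (I j : ℚ) ≠ 0) : coeff I E F * I j = -coeff I E (insert j F) := by
  have hcard : (E \ F).card = (E \ insert j F).card + 1 := by
    rw [Finset.sdiff_insert, Finset.card_erase_add_one (Finset.mem_sdiff.mpr ⟨hjE, hjF⟩)]
  have hprod : ∏ l ∈ Fᶜ, (I l : ℚ) = (∏ l ∈ (insert j F)ᶜ, (I l : ℚ)) * I j := by
    rw [Finset.compl_insert, Finset.prod_erase_mul _ _ (Finset.mem_compl.mpr hjF)]
  rw [coeff, coeff, hcard, hprod, ← div_div, div_mul_cancel₀ _ hj, pow_succ]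
  ring

lemma projN_apply_eq_zero_of_mem_LL_erase {E : Finset (Fin m)} {j : Fin m} (hjE : j ∈ E)
    {w : Cell I → ℚ} (hw : w ∈ LL I (E.erase j)) (i : Cell I) : projN I E w i = 0 := by
  have hpow : E.powerset = (insert j (E.erase j)).powerset := by rw [Finset.insert_erase hjE]
  rw [projN, hpow, Finset.sum_powerset_insert (Finset.notMem_erase j E), ← Finset.sum_add_distrib]
  refine Finset.sum_eq_zero fun F hF => ?_
  have hjF : j ∉ F := fun h => Finset.notMem_erase j E (Finset.mem_powerset.mp hF h)
  have hmarg := marg_erase_of_mem_LL I (Finset.mem_insert_self j F) (Finset.notMem_erase j E) hw i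
  rw [Finset.erase_insert hjF] at hmarg
  rw [hmarg, ← mul_assoc, coeff_mul_of_notMem I hjE hjF (Nat.cast_ne_zero.mpr (i j).pos.ne')]
  ring

lemma projN_mem_LL (E : Finset (Fin m)) (x : Cell I → ℚ) : projN I E x ∈ LL I E := by
  intro i i' h
  refine Finset.sum_congr rfl fun F hF => ?_
  rw [LL_mono I (Finset.mem_powerset.mp hF) (marg_mem_LL I x F) i i' h]

lemma dot_projN_left (E : Finset (Fin m)) (x z : Cell I → ℚ) :
    dot I (projN I E x) z = ∑ F ∈ E.powerset, coeff I E F * dot I (marg I x F) z := by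
  simp only [dot, projN, Finset.sum_mul, Finset.mul_sum, mul_assoc]
  exact Finset.sum_comm

lemma dot_projN_comm (E : Finset (Fin m)) (x z : Cell I → ℚ) :
    dot I (projN I E x) z = dot I x (projN I E z) := by
  rw [dot_comm I x, dot_projN_left, dot_projN_left]
  simp only [dot_marg_comm, dot_comm I x]

lemma projN_mem_perp (E : Finset (Fin m)) (x : Cell I → ℚ) :
    projN I E x ∈ perp I (⨆ j ∈ E, LL I (E.erase j)) := by
  refine mem_perp_iSup I fun j => mem_perp_iSup I fun hjE => fun u hu => ?_
  rw [dot_comm, dot_projN_comm]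
  simp [dot, projN_apply_eq_zero_of_mem_LL_erase I hjE hu]

lemma marg_eq_zero_of_mem_NN {E F : Finset (Fin m)} (hFE : F ⊂ E) {z : Cell I → ℚ}
    (hz : z ∈ NN I E) : marg I z F = 0 := by
  obtain ⟨j, hjE, hjF⟩ := Finset.exists_of_ssubset hFE
  have hmem : marg I z F ∈ ⨆ j ∈ E, LL I (E.erase j) :=
    Submodule.mem_iSup_of_mem j <| Submodule.mem_iSup_of_mem hjE <|
      LL_mono I (Finset.subset_erase.mpr ⟨hFE.subset, hjF⟩) (marg_mem_LL I z F)
  have horth : dot I (marg I z F) z = 0 := (Submodule.mem_inf.mp hz).2 _ hmem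
  have hmargmarg : marg I (marg I z F) F = (∏ l ∈ Fᶜ, (I l : ℚ)) • marg I z F :=
    funext (marg_eq_prod_mul_of_mem_LL I (marg_mem_LL I z F))
  have hself : dot I (marg I z F) (marg I z F) = 0 := by
    rw [dot_marg_comm, hmargmarg, dot_eq_dotProduct, dotProduct_smul, ← dot_eq_dotProduct,
      dot_comm, horth, smul_zero]
  exact dotProduct_self_eq_zero.mp hself

lemma projN_eq_self_of_mem_NN {E : Finset (Fin m)} {z : Cell I → ℚ} (hz : z ∈ NN I E) :
    projN I E z = z := by
  funext i
  rw [projN, Finset.sum_eq_single_of_mem E (Finset.mem_powerset_self E) fun F hF hFE => by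
    rw [marg_eq_zero_of_mem_NN I ((Finset.mem_powerset.mp hF).ssubset_of_ne hFE) hz,
      Pi.zero_apply, mul_zero]]
  have hprod : ∏ l ∈ Eᶜ, (I l : ℚ) ≠ 0 :=
    Finset.prod_ne_zero_iff.mpr fun l _ => Nat.cast_ne_zero.mpr (i l).pos.ne'
  rw [coeff, marg_eq_prod_mul_of_mem_LL I (Submodule.mem_inf.mp hz).1, Finset.sdiff_self,
    Finset.card_empty, pow_zero, one_div, inv_mul_cancel_left₀ hprod]

theorem stmt8 (E : Finset (Fin m)) (x : Cell I → ℚ) :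
    (fun i : Cell I => ∑ F ∈ E.powerset,
        (-1 : ℚ) ^ (E \ F).card / (∏ j ∈ Fᶜ, (I j : ℚ)) * marg I x F i) ∈ NN I E ∧
    (∀ z ∈ NN I E,
      dot I (x - fun i : Cell I => ∑ F ∈ E.powerset,
        (-1 : ℚ) ^ (E \ F).card / (∏ j ∈ Fᶜ, (I j : ℚ)) * marg I x F i) z = 0) := by
  refine ⟨Submodule.mem_inf.mpr ⟨projN_mem_LL I E x, projN_mem_perp I E x⟩, fun z hz => ?_⟩
  change dot I (x - projN I E x) z = 0
  rw [dot_eq_dotProduct, sub_dotProduct, ← dot_eq_dotProduct, ← dot_eq_dotProduct,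
    dot_projN_comm, projN_eq_self_of_mem_NN I hz, sub_self]

end Hier
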